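/- arXiv:2201.09823 — 4 statements merged into one kernel-verified Lean document; each statement's English description precedes it below -/
import Mathlib

section
/- If f : [0,∞) → ℝ is continuous and satisfies f(s) - f(r) ≤ -γ ∫_r^s f(τ) dτ + K(s - r) for all 0 < r < s, where γ, K > 0, then f(t) ≤ f(0) e^{-γ t} + K/γ for all t ≥ 0. -/
/-!
With `g := f - K/γ` the hypothesis becomes `g s - g r ≤ -γ ∫_r^s g`, a weak form of
`g' ≤ -γ g`. Writing `u x = ∫_0^x g`, it says that `g + γ u = u' + γ u` is antitone, which
extends to `0` by continuity. Comparing `u` with the solution of `u' + γ u = C` through the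
integrating factor `e^{γ s}` then gives `e^{γ t} g t ≤ g t + γ u t ≤ g 0`.
-/

open MeasureTheory intervalIntegral Set Filter Topology

theorem AntitoneOn.Ici_of_Ioi {G : ℝ → ℝ} {a : ℝ} (hG : AntitoneOn G (Ioi a))
    (hc : ContinuousWithinAt G (Ioi a) a) : AntitoneOn G (Ici a) := by
  intro r hr s hs hrs
  rcases eq_or_lt_of_le (mem_Ici.mp hr) with rfl | har
  · rcases eq_or_lt_of_le hrs with rfl | hrs
    · rfl
    · refine ge_of_tendsto hc ?_
      filter_upwards [Ioo_mem_nhdsGT hrs] with x hx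
      exact hG hx.1 (mem_Ioi.mpr hrs) hx.2.le
  · exact hG har (har.trans_le hrs) hrs

section Primitive

variable {g : ℝ → ℝ}

theorem uIcc_subset_Ici_of_le {a b c : ℝ} (ha : c ≤ a) (hb : c ≤ b) : uIcc a b ⊆ Ici c :=
  fun _ hx => (le_min ha hb).trans hx.1

theorem ContinuousOn.intervalIntegrable_of_Ici {a b c : ℝ} (hg : ContinuousOn g (Ici c))
    (ha : c ≤ a) (hb : c ≤ b) : IntervalIntegrable g volume a b :=
  (hg.mono (uIcc_subset_Ici_of_le ha hb)).intervalIntegrable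

theorem ContinuousOn.hasDerivAt_integral_of_Ici {a x : ℝ} (hg : ContinuousOn g (Ici a))
    (hx : a < x) : HasDerivAt (fun y => ∫ τ in a..y, g τ) (g x) x :=
  integral_hasDerivAt_right (hg.intervalIntegrable_of_Ici le_rfl hx.le)
    ((hg.mono Ioi_subset_Ici_self).stronglyMeasurableAtFilter isOpen_Ioi x hx)
    (hg.continuousAt (Ici_mem_nhds hx))

theorem ContinuousOn.continuousOn_integral_Ici {a : ℝ} (hg : ContinuousOn g (Ici a)) :
    ContinuousOn (fun y => ∫ τ in a..y, g τ) (Ici a) := by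
  intro x hx
  have hIcc : ContinuousOn (fun y => ∫ τ in a..y, g τ) (Icc a (x + 1)) := by
    rw [← uIcc_of_le (by linarith [mem_Ici.mp hx])]
    exact continuousOn_primitive_interval
      (hg.mono (uIcc_subset_Ici_of_le le_rfl (by linarith [mem_Ici.mp hx]))).integrableOn_uIcc
  refine (hIcc x ⟨hx, by linarith⟩).mono_of_mem_nhdsWithin ?_
  rw [← Ici_inter_Iic]
  exact inter_mem_nhdsWithin _ (Iic_mem_nhds (by linarith))

end Primitive

section Comparison

variable {g : ℝ → ℝ} {γ : ℝ}

theorem antitoneOn_add_mul_integral (hg : ContinuousOn g (Ici 0))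
    (hineq : ∀ r s : ℝ, 0 < r → r < s → g s - g r ≤ -γ * ∫ τ in r..s, g τ) :
    AntitoneOn (fun x => g x + γ * ∫ τ in 0..x, g τ) (Ici 0) := by
  refine AntitoneOn.Ici_of_Ioi (fun r hr s hs hrs => ?_) ?_
  · rcases eq_or_lt_of_le hrs with rfl | hrs
    · rfl
    have hsplit : (∫ τ in 0..s, g τ) - ∫ τ in 0..r, g τ = ∫ τ in r..s, g τ :=
      integral_interval_sub_left (hg.intervalIntegrable_of_Ici le_rfl (le_of_lt hs))
        (hg.intervalIntegrable_of_Ici le_rfl (le_of_lt hr))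
    have hrs' := hineq r s hr hrs
    rw [← hsplit] at hrs'
    linarith
  · exact ((hg.add (continuousOn_const.mul hg.continuousOn_integral_Ici)) 0 self_mem_Ici).mono
      Ioi_subset_Ici_self

theorem exp_mul_le_add_mul_integral (hγ : 0 ≤ γ) (hg : ContinuousOn g (Ici 0))
    (hG : AntitoneOn (fun x => g x + γ * ∫ τ in 0..x, g τ) (Ici 0)) {t : ℝ} (ht : 0 ≤ t) :
    Real.exp (γ * t) * g t ≤ g t + γ * ∫ τ in 0..t, g τ := by
  set u := fun y => ∫ τ in 0..y, g τ
  set C := g t + γ * u t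
  -- `φ' = γ e^{γs} (g s + γ u s - C) ≥ 0` on `[0, t]`, `φ 0 = -C` and `φ t = -e^{γt} g t`.
  set φ := fun s => Real.exp (γ * s) * (γ * u s - C)
  have hφ : MonotoneOn φ (Icc 0 t) := by
    refine monotoneOn_of_hasDerivWithinAt_nonneg (convex_Icc 0 t)
      (f' := fun s => γ * Real.exp (γ * s) * (g s + γ * u s - C)) ?_ (fun s hs => ?_)
      (fun s hs => ?_)
    · exact ((Real.continuous_exp.comp (continuous_const_mul γ)).continuousOn).mul
        ((continuousOn_const.mul (hg.continuousOn_integral_Ici.mono Icc_subset_Ici_self)).sub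
          continuousOn_const)
    · rw [interior_Icc] at hs
      have hexp : HasDerivAt (fun s => Real.exp (γ * s)) (Real.exp (γ * s) * γ) s :=
        ((hasDerivAt_id s).const_mul γ).exp.congr_deriv (by simp)
      have hu := ((hg.hasDerivAt_integral_of_Ici hs.1).const_mul γ).sub_const C
      exact ((hexp.mul hu).congr_deriv (by ring)).hasDerivWithinAt
    · rw [interior_Icc] at hs
      have hCs : 0 ≤ g s + γ * u s - C :=
        sub_nonneg.mpr (hG (mem_Ici.mpr hs.1.le) (mem_Ici.mpr ht) hs.2.le)
      positivity
  have hφt := hφ (left_mem_Icc.mpr ht) (right_mem_Icc.mpr ht) ht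
  simp only [φ, u, C, mul_zero, Real.exp_zero, integral_same, one_mul] at hφt
  linarith

theorem le_mul_exp_neg_of_sub_le_neg_mul_integral (hγ : 0 ≤ γ) (hg : ContinuousOn g (Ici 0))
    (hineq : ∀ r s : ℝ, 0 < r → r < s → g s - g r ≤ -γ * ∫ τ in r..s, g τ) {t : ℝ}
    (ht : 0 ≤ t) : g t ≤ g 0 * Real.exp (-γ * t) := by
  have hG := antitoneOn_add_mul_integral hg hineq
  have hGt : g t + γ * (∫ τ in 0..t, g τ) ≤ g 0 := by
    simpa using hG self_mem_Ici (mem_Ici.mpr ht) ht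
  have key := (exp_mul_le_add_mul_integral hγ hg hG ht).trans hGt
  calc g t = Real.exp (-γ * t) * (Real.exp (γ * t) * g t) := by
        rw [← mul_assoc, ← Real.exp_add]; simp
    _ ≤ g 0 * Real.exp (-γ * t) := by
        rw [mul_comm (g 0)]; exact mul_le_mul_of_nonneg_left key (Real.exp_pos _).le

end Comparison

/-- Comparison theorem (integral Gronwall-type lemma). -/
theorem stmt0 (f : ℝ → ℝ) (γ K : ℝ) (hγ : 0 < γ) (hK : 0 < K)
    (hf : ContinuousOn f (Set.Ici (0 : ℝ)))
    (hineq : ∀ r s : ℝ, 0 < r → r < s →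
      f s - f r ≤ -γ * (∫ τ in r..s, f τ) + K * (s - r)) :
    ∀ t : ℝ, 0 ≤ t → f t ≤ f 0 * Real.exp (-γ * t) + K / γ := by
  intro t ht
  have hg : ContinuousOn (fun x => f x - K / γ) (Ici 0) := hf.sub continuousOn_const
  have hgineq : ∀ r s : ℝ, 0 < r → r < s →
      (f s - K / γ) - (f r - K / γ) ≤ -γ * ∫ τ in r..s, (f τ - K / γ) := by
    intro r s hr hrs
    rw [integral_sub (hf.intervalIntegrable_of_Ici hr.le (hr.trans hrs).le)
      intervalIntegrable_const, intervalIntegral.integral_const, smul_eq_mul]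
    have hγK : γ * (K / γ) = K := mul_div_cancel₀ K hγ.ne'
    linear_combination hineq r s hr hrs - (s - r) * hγK
  have hcomp := le_mul_exp_neg_of_sub_le_neg_mul_integral hγ.le hg hgineq ht
  have hpos := mul_pos (div_pos hK hγ) (Real.exp_pos (-γ * t))
  linarith
end

section
/- Under the assumptions of the previous statement, if additionally a control G satisfies |G(X(s),Ỹ(s))|² ≤ c|X(s)-Ỹ(s)|² for some c > 0, and Q_n^{-1/2} is a bounded operator, then for all t ≥ 0: ∫₀ᵗ |Q_n^{-1/2}G(X(s),Ỹ(s))|² ds ≤ (c‖Q_n^{-1/2}‖²/χ)|x-y|² exp((κ₁/κ₂)(|x|²+Ξ))(1 - e^{-χt}), where χ = κ₀ - κ₁κ₃/κ₂. -/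
/-!
Combining the energy inequality with the contraction estimate: `κ₂ ∫₀ˢ nV(X) ≤ |x|² + κ₃ s + Ξ`
turns the exponent `-κ₀ s + κ₁ ∫₀ˢ nV(X)` into `-χ s + (κ₁/κ₂)(|x|² + Ξ)`, so the integrand
`|T G(X s, Ỹ s)|² ≤ ‖T‖² c |X s - Ỹ s|²` decays like `e^{-χ s}`, whose integral over `[0, t]` is
`(1 - e^{-χ t}) / χ`.
-/

open MeasureTheory intervalIntegral Real

theorem integral_exp_neg_mul (χ t : ℝ) (hχ : χ ≠ 0) :
    ∫ s in (0:ℝ)..t, exp (-χ * s) = (1 - exp (-χ * t)) / χ := by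
  rw [integral_comp_mul_left (fun s => exp s) (neg_ne_zero.mpr hχ), integral_exp,
    mul_zero, exp_zero, smul_eq_mul]
  field_simp
  ring

/-- No integrability of `f` is needed: otherwise the integral is the junk value `0`. -/
theorem integral_le_of_le_mul_exp_neg {f : ℝ → ℝ} {A χ t : ℝ} (hA : 0 ≤ A) (hχ : 0 < χ)
    (ht : 0 ≤ t) (hf : ∀ s ∈ Set.Icc 0 t, f s ≤ A * exp (-χ * s)) :
    ∫ s in (0:ℝ)..t, f s ≤ A / χ * (1 - exp (-χ * t)) := by
  have hbound : ∫ s in (0:ℝ)..t, A * exp (-χ * s) = A / χ * (1 - exp (-χ * t)) := by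
    rw [intervalIntegral.integral_const_mul, integral_exp_neg_mul χ t hχ.ne']
    ring
  rw [← hbound]
  by_cases hfint : IntervalIntegrable f volume 0 t
  · exact integral_mono_on ht hfint (Continuous.intervalIntegrable (by fun_prop) 0 t) hf
  · have hdecay : exp (-χ * t) ≤ 1 := exp_le_one_iff.mpr (by nlinarith)
    rw [integral_undef hfint, hbound]
    exact mul_nonneg (div_nonneg hA hχ.le) (sub_nonneg.mpr hdecay)

theorem exponent_le_of_energy {κ₀ κ₁ κ₂ κ₃ I a s : ℝ} (hκ₁ : 0 ≤ κ₁) (hκ₂ : 0 < κ₂)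
    (hI : κ₂ * I ≤ a + κ₃ * s) :
    -κ₀ * s + κ₁ * I ≤ -(κ₀ - κ₁ * κ₃ / κ₂) * s + κ₁ / κ₂ * a := by
  have hκ₁I : κ₁ * I ≤ κ₁ / κ₂ * (a + κ₃ * s) :=
    calc κ₁ * I = κ₁ / κ₂ * (κ₂ * I) := by field_simp
      _ ≤ κ₁ / κ₂ * (a + κ₃ * s) := by gcongr
  linarith [show κ₁ / κ₂ * (a + κ₃ * s) = κ₁ / κ₂ * a + κ₁ * κ₃ / κ₂ * s by ring]

theorem sq_norm_apply_le {E F : Type*} [SeminormedAddCommGroup E] [SeminormedAddCommGroup F]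
    [NormedSpace ℝ E] [NormedSpace ℝ F] (T : E →L[ℝ] F) (x : E) :
    ‖T x‖ ^ 2 ≤ ‖T‖ ^ 2 * ‖x‖ ^ 2 := by
  rw [← mul_pow]
  exact pow_le_pow_left₀ (norm_nonneg _) (T.le_opNorm x) 2

theorem stmt5_general {H : Type*} [NormedAddCommGroup H] [InnerProductSpace ℝ H]
    (X Y : ℝ → H) (nV : H → ℝ)
    (Ξ κ₀ κ₁ κ₂ κ₃ : ℝ)
    (hκ₁ : 0 < κ₁) (hκ₂ : 0 < κ₂)
    (hχ : κ₁ * κ₃ / κ₂ < κ₀)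
    (hA1 : ∀ t : ℝ, 0 ≤ t →
      ‖X t - Y t‖ ^ 2 ≤ ‖X 0 - Y 0‖ ^ 2 *
        Real.exp (-κ₀ * t + κ₁ * ∫ s in (0:ℝ)..t, nV (X s)))
    (hA2 : ∀ t : ℝ, 0 ≤ t →
      ‖X t‖ ^ 2 + κ₂ * (∫ s in (0:ℝ)..t, nV (X s)) ≤ ‖X 0‖ ^ 2 + κ₃ * t + Ξ)
    (G : H → H → H) (c : ℝ) (hc : 0 < c)
    (hA3 : ∀ s : ℝ, 0 ≤ s → ‖G (X s) (Y s)‖ ^ 2 ≤ c * ‖X s - Y s‖ ^ 2)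
    (T : H →L[ℝ] H) :
    ∀ t : ℝ, 0 ≤ t →
      (∫ s in (0:ℝ)..t, ‖T (G (X s) (Y s))‖ ^ 2) ≤
        (c * ‖T‖ ^ 2 / (κ₀ - κ₁ * κ₃ / κ₂)) * ‖X 0 - Y 0‖ ^ 2 *
          Real.exp ((κ₁ / κ₂) * (‖X 0‖ ^ 2 + Ξ)) *
          (1 - Real.exp (-(κ₀ - κ₁ * κ₃ / κ₂) * t)) := by
  intro t ht
  set χ := κ₀ - κ₁ * κ₃ / κ₂
  set K := κ₁ / κ₂ * (‖X 0‖ ^ 2 + Ξ)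
  have hdecay : ∀ s ∈ Set.Icc 0 t, ‖T (G (X s) (Y s))‖ ^ 2 ≤
      c * ‖T‖ ^ 2 * ‖X 0 - Y 0‖ ^ 2 * exp K * exp (-χ * s) := by
    rintro s ⟨hs, -⟩
    have hexponent : -κ₀ * s + κ₁ * ∫ u in (0:ℝ)..s, nV (X u) ≤ -χ * s + K :=
      exponent_le_of_energy hκ₁.le hκ₂ (by nlinarith [hA2 s hs, sq_nonneg ‖X s‖])
    calc ‖T (G (X s) (Y s))‖ ^ 2 ≤ ‖T‖ ^ 2 * (c * ‖X s - Y s‖ ^ 2) :=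
          (sq_norm_apply_le T _).trans (by gcongr; exact hA3 s hs)
      _ ≤ ‖T‖ ^ 2 * (c * (‖X 0 - Y 0‖ ^ 2 * exp (-χ * s + K))) := by
          gcongr
          exact (hA1 s hs).trans (by gcongr)
      _ = c * ‖T‖ ^ 2 * ‖X 0 - Y 0‖ ^ 2 * exp K * exp (-χ * s) := by rw [exp_add]; ring
  calc _ ≤ c * ‖T‖ ^ 2 * ‖X 0 - Y 0‖ ^ 2 * exp K / χ * (1 - exp (-χ * t)) :=
        integral_le_of_le_mul_exp_neg (by positivity) (sub_pos.mpr hχ) ht hdecay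
    _ = _ := by ring

/-- Bound on the Girsanov cost of the control: under (A1)-(A3),
`∫₀ᵗ |Qₙ^{-1/2} G(X(s),Ỹ(s))|² ds ≤ (c‖Qₙ^{-1/2}‖²/χ)|x-y|² e^{(κ₁/κ₂)(|x|²+Ξ)}(1-e^{-χt})`,
with `χ = κ₀ - κ₁κ₃/κ₂ > 0`.  Here `T` plays the role of `Qₙ^{-1/2}` and
`nV : H → ℝ` is the square of the second (stronger) norm. -/
theorem stmt5 {H : Type*} [NormedAddCommGroup H] [InnerProductSpace ℝ H]
    (X Y : ℝ → H) (nV : H → ℝ) (hnV : ∀ z, 0 ≤ nV z)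
    (Ξ κ₀ κ₁ κ₂ κ₃ : ℝ)
    (hκ₀ : 0 < κ₀) (hκ₁ : 0 < κ₁) (hκ₂ : 0 < κ₂) (hκ₃ : 0 < κ₃)
    (hχ : κ₁ * κ₃ / κ₂ < κ₀) (hΞ : 0 ≤ Ξ)
    (hA1 : ∀ t : ℝ, 0 ≤ t →
      ‖X t - Y t‖ ^ 2 ≤ ‖X 0 - Y 0‖ ^ 2 *
        Real.exp (-κ₀ * t + κ₁ * ∫ s in (0:ℝ)..t, nV (X s)))
    (hA2 : ∀ t : ℝ, 0 ≤ t →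
      ‖X t‖ ^ 2 + κ₂ * (∫ s in (0:ℝ)..t, nV (X s)) ≤ ‖X 0‖ ^ 2 + κ₃ * t + Ξ)
    (G : H → H → H) (c : ℝ) (hc : 0 < c)
    (hA3 : ∀ s : ℝ, 0 ≤ s → ‖G (X s) (Y s)‖ ^ 2 ≤ c * ‖X s - Y s‖ ^ 2)
    (T : H →L[ℝ] H) :
    ∀ t : ℝ, 0 ≤ t →
      (∫ s in (0:ℝ)..t, ‖T (G (X s) (Y s))‖ ^ 2) ≤
        (c * ‖T‖ ^ 2 / (κ₀ - κ₁ * κ₃ / κ₂)) * ‖X 0 - Y 0‖ ^ 2 *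
          Real.exp ((κ₁ / κ₂) * (‖X 0‖ ^ 2 + Ξ)) *
          (1 - Real.exp (-(κ₀ - κ₁ * κ₃ / κ₂) * t)) :=
  stmt5_general X Y nV Ξ κ₀ κ₁ κ₂ κ₃ hκ₁ hκ₂ hχ hA1 hA2 G c hc hA3 T
end

section
/- Let A = -(Δ + M) with M the 2×2 matrix with rows (-F₁, F₁) and (F₂, -F₂), F₁, F₂ > 0, acting on pairs ψ = (ψ₁,ψ₂) of zero-mean periodic H^{k+2} functions. Then with the weighted inner product (ψ,ξ)_k = h₁(ψ₁,ξ₁)_k + h₂(ψ₂,ξ₂)_k where h₁F₁ = h₂F₂ = p, one has (Aψ, ψ)_k = ‖ψ‖²_{k+1} + p|ψ₁-ψ₂|²_k ≥ 0; in particular A is nonnegative and symmetric with respect to (·,·)_k. -/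
/-!
The weights are chosen so that `h₁F₁ = h₂F₂ = p`: then the weighted coupling terms of
`(Aψ, ξ)_k` combine into `p (ψ₁ - ψ₂, ξ₁ - ξ₂)_k`, which is symmetric in `ψ, ξ` and equals
`p |ψ₁ - ψ₂|²_k` for `ξ = ψ`. The diffusion part inherits symmetry and nonnegativity from `-Δ`.
-/

open RealInnerProductSpace

section WeightedCoupling

variable {V : Type*} [NormedAddCommGroup V] [InnerProductSpace ℝ V] {h₁ h₂ F₁ F₂ p : ℝ}

theorem weighted_inner_coupling (hp₁ : h₁ * F₁ = p) (hp₂ : h₂ * F₂ = p) (ψ₁ ψ₂ ξ₁ ξ₂ : V) :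
    h₁ * ⟪F₁ • (ψ₁ - ψ₂), ξ₁⟫ + h₂ * ⟪F₂ • (ψ₂ - ψ₁), ξ₂⟫ = p * ⟪ψ₁ - ψ₂, ξ₁ - ξ₂⟫ := by
  rw [real_inner_smul_left, real_inner_smul_left, ← mul_assoc, ← mul_assoc, hp₁, hp₂,
    inner_sub_right, ← neg_sub ψ₁ ψ₂, inner_neg_left]
  ring

theorem weighted_inner_diffusion_add_coupling (hp₁ : h₁ * F₁ = p) (hp₂ : h₂ * F₂ = p)
    (D : V → V) (ψ₁ ψ₂ ξ₁ ξ₂ : V) :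
    h₁ * ⟪D ψ₁ + F₁ • (ψ₁ - ψ₂), ξ₁⟫ + h₂ * ⟪D ψ₂ + F₂ • (ψ₂ - ψ₁), ξ₂⟫ =
      (h₁ * ⟪D ψ₁, ξ₁⟫ + h₂ * ⟪D ψ₂, ξ₂⟫) + p * ⟪ψ₁ - ψ₂, ξ₁ - ξ₂⟫ := by
  rw [← weighted_inner_coupling hp₁ hp₂, inner_add_left, inner_add_left]
  ring

end WeightedCoupling

theorem stmt9_general {V : Type*} [NormedAddCommGroup V] [InnerProductSpace ℝ V]
    (D : V →ₗ[ℝ] V)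
    (hDsym : ∀ φ χ : V, ⟪D φ, χ⟫ = ⟪φ, D χ⟫)
    (hDpos : ∀ φ : V, 0 ≤ ⟪D φ, φ⟫)
    (h₁ h₂ F₁ F₂ p : ℝ)
    (hh₁ : 0 < h₁) (hh₂ : 0 < h₂) (hF₁ : 0 < F₁)
    (hp₁ : h₁ * F₁ = p) (hp₂ : h₂ * F₂ = p) :
    (∀ ψ₁ ψ₂ : V,
      h₁ * ⟪D ψ₁ + F₁ • (ψ₁ - ψ₂), ψ₁⟫ + h₂ * ⟪D ψ₂ + F₂ • (ψ₂ - ψ₁), ψ₂⟫ =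
        (h₁ * ⟪D ψ₁, ψ₁⟫ + h₂ * ⟪D ψ₂, ψ₂⟫) + p * ‖ψ₁ - ψ₂‖ ^ 2 ∧
      0 ≤ h₁ * ⟪D ψ₁ + F₁ • (ψ₁ - ψ₂), ψ₁⟫ + h₂ * ⟪D ψ₂ + F₂ • (ψ₂ - ψ₁), ψ₂⟫) ∧
    (∀ ψ₁ ψ₂ ξ₁ ξ₂ : V,
      h₁ * ⟪D ψ₁ + F₁ • (ψ₁ - ψ₂), ξ₁⟫ + h₂ * ⟪D ψ₂ + F₂ • (ψ₂ - ψ₁), ξ₂⟫ =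
        h₁ * ⟪ψ₁, D ξ₁ + F₁ • (ξ₁ - ξ₂)⟫ + h₂ * ⟪ψ₂, D ξ₂ + F₂ • (ξ₂ - ξ₁)⟫) := by
  have expand := weighted_inner_diffusion_add_coupling hp₁ hp₂ D
  have hp : 0 ≤ p := hp₁ ▸ (mul_pos hh₁ hF₁).le
  refine ⟨fun ψ₁ ψ₂ => ?_, fun ψ₁ ψ₂ ξ₁ ξ₂ => ?_⟩
  · rw [expand, real_inner_self_eq_norm_sq]
    exact ⟨rfl, add_nonneg (add_nonneg (mul_nonneg hh₁.le (hDpos ψ₁))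
      (mul_nonneg hh₂.le (hDpos ψ₂))) (mul_nonneg hp (sq_nonneg _))⟩
  · rw [expand, real_inner_comm _ ψ₁, real_inner_comm _ ψ₂, expand, hDsym ξ₁, hDsym ξ₂,
      real_inner_comm (D ψ₁), real_inner_comm (D ψ₂), real_inner_comm (ψ₁ - ψ₂)]

/-- The operator `A = -(Δ + M)` on pairs of zero-mean periodic functions is
nonnegative and symmetric for the weighted `H^k` inner product:
`(Aψ, ψ)_k = ‖ψ‖²_{k+1} + p |ψ₁ - ψ₂|²_k ≥ 0`.
The `H^k` space is modelled by an abstract real inner product space `V`; `D`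
plays the role of `-Δ`, so that `‖φ‖²_{k+1} = ⟪Dφ, φ⟫_k`, and the first
component of `Aψ` is `Dψ₁ + F₁(ψ₁ - ψ₂)`, the second `Dψ₂ + F₂(ψ₂ - ψ₁)`. -/
theorem stmt9 {V : Type*} [NormedAddCommGroup V] [InnerProductSpace ℝ V]
    (D : V →ₗ[ℝ] V)
    (hDsym : ∀ φ χ : V, ⟪D φ, χ⟫ = ⟪φ, D χ⟫)
    (hDpos : ∀ φ : V, 0 ≤ ⟪D φ, φ⟫)
    (h₁ h₂ F₁ F₂ p : ℝ)
    (hh₁ : 0 < h₁) (hh₂ : 0 < h₂) (hF₁ : 0 < F₁) (hF₂ : 0 < F₂)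
    (hp₁ : h₁ * F₁ = p) (hp₂ : h₂ * F₂ = p) :
    (∀ ψ₁ ψ₂ : V,
      h₁ * ⟪D ψ₁ + F₁ • (ψ₁ - ψ₂), ψ₁⟫ + h₂ * ⟪D ψ₂ + F₂ • (ψ₂ - ψ₁), ψ₂⟫ =
        (h₁ * ⟪D ψ₁, ψ₁⟫ + h₂ * ⟪D ψ₂, ψ₂⟫) + p * ‖ψ₁ - ψ₂‖ ^ 2 ∧
      0 ≤ h₁ * ⟪D ψ₁ + F₁ • (ψ₁ - ψ₂), ψ₁⟫ + h₂ * ⟪D ψ₂ + F₂ • (ψ₂ - ψ₁), ψ₂⟫) ∧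
    (∀ ψ₁ ψ₂ ξ₁ ξ₂ : V,
      h₁ * ⟪D ψ₁ + F₁ • (ψ₁ - ψ₂), ξ₁⟫ + h₂ * ⟪D ψ₂ + F₂ • (ψ₂ - ψ₁), ξ₂⟫ =
        h₁ * ⟪ψ₁, D ξ₁ + F₁ • (ξ₁ - ξ₂)⟫ + h₂ * ⟪ψ₂, D ξ₂ + F₂ • (ξ₂ - ξ₁)⟫) :=
  stmt9_general D hDsym hDpos h₁ h₂ F₁ F₂ p hh₁ hh₂ hF₁ hp₁ hp₂
end

section
/- With q = -(Δ + M)ψ as above, one has -(q, ψ) = ‖ψ‖² + p|ψ₁-ψ₂|², where (·,·) is the weighted L² inner product and ‖·‖ the weighted H¹ seminorm; consequently the triple norm ⦀q⦀₋₁² := ‖ψ‖² + p|ψ₁-ψ₂|² satisfies ‖ψ‖² ≤ ⦀q⦀₋₁² ≤ (1 + 2λ₁^{-1}max(F₁,F₂))‖ψ‖². -/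
open RealInnerProductSpace

/-!
Expanding `q = -(Δ + M)ψ` against `ψ`, the relations `h₁F₁ = h₂F₂ = p` make the two coupling
terms combine into `p⟪ψ₁ - ψ₂, ψ₁ - ψ₂⟫`, which gives the identity and the lower bound. For the
upper bound, the parallelogram law gives `|ψ₁ - ψ₂|² ≤ 2|ψ₁|² + 2|ψ₂|²`; Poincaré bounds each
`|ψᵢ|²` by `λ₁⁻¹⟪-Δψᵢ, ψᵢ⟫`, and writing `p = hᵢFᵢ ≤ hᵢ max(F₁, F₂)` turns the sum into the
weighted `H¹` seminorm.
-/

section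

variable {V : Type*} [NormedAddCommGroup V] [InnerProductSpace ℝ V]

theorem norm_sub_sq_le_two_mul (x y : V) : ‖x - y‖ ^ 2 ≤ 2 * ‖x‖ ^ 2 + 2 * ‖y‖ ^ 2 := by
  have := parallelogram_law_with_norm ℝ x y
  nlinarith [sq_nonneg ‖x + y‖]

theorem inner_coupling_eq {h₁ h₂ F₁ F₂ p : ℝ} (hp₁ : h₁ * F₁ = p) (hp₂ : h₂ * F₂ = p)
    (x y : V) :
    h₁ * ⟪F₁ • (y - x), x⟫ + h₂ * ⟪F₂ • (x - y), y⟫ = -(p * ‖x - y‖ ^ 2) := by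
  rw [real_inner_smul_left, real_inner_smul_left, ← mul_assoc, ← mul_assoc, hp₁, hp₂,
    ← real_inner_self_eq_norm_sq]
  simp only [inner_sub_left, inner_sub_right, real_inner_comm x y]
  ring

theorem neg_inner_coupled_eq {h₁ h₂ F₁ F₂ p : ℝ} (hp₁ : h₁ * F₁ = p) (hp₂ : h₂ * F₂ = p)
    (a₁ a₂ x y : V) :
    -(h₁ * ⟪-a₁ + F₁ • (y - x), x⟫ + h₂ * ⟪-a₂ + F₂ • (x - y), y⟫) =
      (h₁ * ⟪a₁, x⟫ + h₂ * ⟪a₂, y⟫) + p * ‖x - y‖ ^ 2 := by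
  simp only [inner_add_left, inner_neg_left]
  linear_combination -inner_coupling_eq hp₁ hp₂ x y

theorem mul_norm_sub_sq_le {c h₁ h₂ F₁ F₂ p E₁ E₂ : ℝ} (hh₁ : 0 ≤ h₁) (hh₂ : 0 ≤ h₂)
    (hp : 0 ≤ p) (hp₁ : h₁ * F₁ = p) (hp₂ : h₂ * F₂ = p) {x y : V}
    (hx : ‖x‖ ^ 2 ≤ c * E₁) (hy : ‖y‖ ^ 2 ≤ c * E₂) :
    p * ‖x - y‖ ^ 2 ≤ 2 * c * max F₁ F₂ * (h₁ * E₁ + h₂ * E₂) := by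
  have hE₁ : 0 ≤ c * E₁ := (sq_nonneg _).trans hx
  have hE₂ : 0 ≤ c * E₂ := (sq_nonneg _).trans hy
  calc p * ‖x - y‖ ^ 2 ≤ p * (2 * (c * E₁) + 2 * (c * E₂)) := by
        gcongr
        linarith [norm_sub_sq_le_two_mul x y]
    _ = 2 * (h₁ * F₁ * (c * E₁) + h₂ * F₂ * (c * E₂)) := by rw [hp₁, hp₂]; ring
    _ ≤ 2 * (h₁ * max F₁ F₂ * (c * E₁) + h₂ * max F₁ F₂ * (c * E₂)) := by
        gcongr
        · exact le_max_left F₁ F₂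
        · exact le_max_right F₁ F₂
    _ = 2 * c * max F₁ F₂ * (h₁ * E₁ + h₂ * E₂) := by ring

end

theorem stmt11_general {V : Type*} [NormedAddCommGroup V] [InnerProductSpace ℝ V]
    (D : V →ₗ[ℝ] V)
    (lam₁ : ℝ)
    (hPoincare : ∀ φ : V, ‖φ‖ ^ 2 ≤ lam₁⁻¹ * ⟪D φ, φ⟫)
    (h₁ h₂ F₁ F₂ p : ℝ)
    (hh₁ : 0 < h₁) (hh₂ : 0 < h₂) (hF₁ : 0 < F₁)
    (hp₁ : h₁ * F₁ = p) (hp₂ : h₂ * F₂ = p)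
    (ψ₁ ψ₂ : V) :
    -(h₁ * ⟪-(D ψ₁) + F₁ • (ψ₂ - ψ₁), ψ₁⟫ + h₂ * ⟪-(D ψ₂) + F₂ • (ψ₁ - ψ₂), ψ₂⟫) =
        (h₁ * ⟪D ψ₁, ψ₁⟫ + h₂ * ⟪D ψ₂, ψ₂⟫) + p * ‖ψ₁ - ψ₂‖ ^ 2 ∧
    h₁ * ⟪D ψ₁, ψ₁⟫ + h₂ * ⟪D ψ₂, ψ₂⟫ ≤
        (h₁ * ⟪D ψ₁, ψ₁⟫ + h₂ * ⟪D ψ₂, ψ₂⟫) + p * ‖ψ₁ - ψ₂‖ ^ 2 ∧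
    (h₁ * ⟪D ψ₁, ψ₁⟫ + h₂ * ⟪D ψ₂, ψ₂⟫) + p * ‖ψ₁ - ψ₂‖ ^ 2 ≤
        (1 + 2 * lam₁⁻¹ * max F₁ F₂) * (h₁ * ⟪D ψ₁, ψ₁⟫ + h₂ * ⟪D ψ₂, ψ₂⟫) := by
  have hp : 0 ≤ p := hp₁ ▸ (mul_pos hh₁ hF₁).le
  have hcoupling := mul_norm_sub_sq_le hh₁.le hh₂.le hp hp₁ hp₂ (hPoincare ψ₁) (hPoincare ψ₂)
  refine ⟨neg_inner_coupled_eq hp₁ hp₂ _ _ ψ₁ ψ₂, le_add_of_nonneg_right (by positivity), ?_⟩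
  linear_combination hcoupling

/-- With `q = (Δ + M)ψ` (so that `q = -Ãψ` where `Ã = -(Δ+M)`), one has
`-(q, ψ) = ‖ψ‖²_{H¹} + p |ψ₁ - ψ₂|²` and the triple norm
`⦀q⦀₋₁² := ‖ψ‖² + p|ψ₁-ψ₂|²` satisfies
`‖ψ‖² ≤ ⦀q⦀₋₁² ≤ (1 + 2λ₁⁻¹ max(F₁,F₂)) ‖ψ‖²`.
The `L²` space is an abstract real inner product space `V`; `D` models `-Δ`
(symmetric, nonnegative), the weighted `H¹` seminorm is
`‖ψ‖² = h₁⟪Dψ₁,ψ₁⟫ + h₂⟪Dψ₂,ψ₂⟫`, `q₁ = -Dψ₁ + F₁(ψ₂-ψ₁)`,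
`q₂ = -Dψ₂ + F₂(ψ₁-ψ₂)`, and the Poincaré inequality
`‖φ‖²_{L²} ≤ λ₁⁻¹ ⟪Dφ,φ⟫` is assumed. -/
theorem stmt11 {V : Type*} [NormedAddCommGroup V] [InnerProductSpace ℝ V]
    (D : V →ₗ[ℝ] V)
    (hDsym : ∀ φ χ : V, ⟪D φ, χ⟫ = ⟪φ, D χ⟫)
    (hDpos : ∀ φ : V, 0 ≤ ⟪D φ, φ⟫)
    (lam₁ : ℝ) (hlam : 0 < lam₁)
    (hPoincare : ∀ φ : V, ‖φ‖ ^ 2 ≤ lam₁⁻¹ * ⟪D φ, φ⟫)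
    (h₁ h₂ F₁ F₂ p : ℝ)
    (hh₁ : 0 < h₁) (hh₂ : 0 < h₂) (hF₁ : 0 < F₁) (hF₂ : 0 < F₂)
    (hp₁ : h₁ * F₁ = p) (hp₂ : h₂ * F₂ = p)
    (ψ₁ ψ₂ : V) :
    -(h₁ * ⟪-(D ψ₁) + F₁ • (ψ₂ - ψ₁), ψ₁⟫ + h₂ * ⟪-(D ψ₂) + F₂ • (ψ₁ - ψ₂), ψ₂⟫) =
        (h₁ * ⟪D ψ₁, ψ₁⟫ + h₂ * ⟪D ψ₂, ψ₂⟫) + p * ‖ψ₁ - ψ₂‖ ^ 2 ∧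
    h₁ * ⟪D ψ₁, ψ₁⟫ + h₂ * ⟪D ψ₂, ψ₂⟫ ≤
        (h₁ * ⟪D ψ₁, ψ₁⟫ + h₂ * ⟪D ψ₂, ψ₂⟫) + p * ‖ψ₁ - ψ₂‖ ^ 2 ∧
    (h₁ * ⟪D ψ₁, ψ₁⟫ + h₂ * ⟪D ψ₂, ψ₂⟫) + p * ‖ψ₁ - ψ₂‖ ^ 2 ≤
        (1 + 2 * lam₁⁻¹ * max F₁ F₂) * (h₁ * ⟪D ψ₁, ψ₁⟫ + h₂ * ⟪D ψ₂, ψ₂⟫) :=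
  stmt11_general D lam₁ hPoincare h₁ h₂ F₁ F₂ p hh₁ hh₂ hF₁ hp₁ hp₂ ψ₁ ψ₂
end
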